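/- Let m ≥ 2, β > 1 satisfy β^m = β^{m-1} + ⋯ + β + 1, and ρ = 1/β. Let n ≤ m and ε, ε' ∈ {−1,+1}^n with ε < ε' in lexicographic order (with −1 < +1). Then Σ_{j=1}^n ε_j ρ^j < Σ_{j=1}^n ε'_j ρ^j. In particular, the map ε ↦ Σ_{j=1}^n ε_j ρ^j is injective on {−1,+1}^n when n ≤ m. -/

import Mathlib

/-!
Multiplying the defining equation by `β⁻ᵐ` gives `ρ + ρ² + ⋯ + ρᵐ = 1`, so any run of fewer than
`m` consecutive weights `ρ^(k+2) + ⋯` sums to less than `ρ^(k+1)`. When `ε` and `ε'` first differ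
at position `k`, the gain `2 ρ^(k+1)` there therefore beats the largest possible loss
`2 (ρ^(k+2) + ⋯ + ρ^n)` afterwards, since `n ≤ m`.
-/

open Finset

section Lex

variable {ι : Type*} [Fintype ι] [LinearOrder ι] [LocallyFiniteOrderTop ι]

theorem sum_mul_lt_sum_mul_of_lex {w ε ε' : ι → ℝ} {k : ι} (hw : ∀ j, 0 ≤ w j)
    (hε : ∀ j, ε j ≤ 1) (hε' : ∀ j, -1 ≤ ε' j) (hdom : ∑ j ∈ Ioi k, w j < w k)
    (heq : ∀ j < k, ε j = ε' j) (hk : ε k = -1) (hk' : ε' k = 1) :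
    ∑ j, ε j * w j < ∑ j, ε' j * w j := by
  have htail : -2 * ∑ j ∈ Ioi k, w j ≤ ∑ j ∈ Ioi k, (ε' j - ε j) * w j := by
    rw [mul_sum]
    exact sum_le_sum fun j _ => by nlinarith [hw j, hε j, hε' j]
  have hhead : ∑ j ∈ Ici k, (ε' j - ε j) * w j = ∑ j, (ε' j - ε j) * w j :=
    sum_subset (subset_univ _) fun j _ hj => by
      rw [heq j (not_le.mp (mem_Ici.not.mp hj)), sub_self, zero_mul]
  have hpos : 0 < ∑ j, (ε' j - ε j) * w j := by
    rw [← hhead, ← add_sum_Ioi_eq_sum_Ici, hk, hk']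
    linarith
  simp only [sub_mul, sum_sub_distrib] at hpos
  linarith

end Lex

section Pisot

variable {ρ : ℝ} {m : ℕ}

theorem sum_range_inv_pow_succ_eq_one {β : ℝ} (hβ0 : β ≠ 0)
    (hβ : β ^ m = ∑ j ∈ range m, β ^ j) : ∑ i ∈ range m, β⁻¹ ^ (i + 1) = 1 := by
  have hterm : ∀ i ∈ range m, β⁻¹ ^ (i + 1) = β ^ (m - 1 - i) / β ^ m := by
    intro i hi
    have hm : β ^ m = β ^ (m - 1 - i) * β ^ (i + 1) := by
      rw [← pow_add]; congr 1; have := mem_range.mp hi; omega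
    rw [hm, inv_pow]
    field_simp
  rw [sum_congr rfl hterm, ← sum_div, sum_range_reflect (β ^ ·) m, ← hβ,
    div_self (pow_ne_zero _ hβ0)]

theorem sum_range_pow_succ_lt_one (hρ : 0 < ρ) (hone : ∑ i ∈ range m, ρ ^ (i + 1) = 1)
    {L : ℕ} (hL : L < m) : ∑ i ∈ range L, ρ ^ (i + 1) < 1 :=
  hone ▸ sum_lt_sum_of_subset (range_subset_range.mpr hL.le) (mem_range.mpr hL)
    (by simp) (pow_pos hρ _) fun _ _ _ => (pow_pos hρ _).le

theorem sum_Ico_pow_succ_lt_pow (hρ : 0 < ρ) (hone : ∑ i ∈ range m, ρ ^ (i + 1) = 1)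
    {a b : ℕ} (hab : b - a < m) : ∑ i ∈ Ico a b, ρ ^ (i + 1) < ρ ^ a := by
  have hshift : ∑ i ∈ Ico a b, ρ ^ (i + 1) = ρ ^ a * ∑ t ∈ range (b - a), ρ ^ (t + 1) := by
    rw [sum_Ico_eq_sum_range, mul_sum]
    exact sum_congr rfl fun t _ => by rw [← pow_add, add_assoc]
  rw [hshift]
  exact mul_lt_of_lt_one_right (pow_pos hρ a) (sum_range_pow_succ_lt_one hρ hone hab)

theorem sum_Ioi_pow_succ_lt (hρ : 0 < ρ) (hone : ∑ i ∈ range m, ρ ^ (i + 1) = 1)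
    {n : ℕ} (hn : n ≤ m) (k : Fin n) :
    ∑ j ∈ Ioi k, ρ ^ ((j : ℕ) + 1) < ρ ^ ((k : ℕ) + 1) := by
  have hmap := sum_map (Ioi k) Fin.valEmbedding (fun i => ρ ^ (i + 1))
  rw [Fin.map_valEmbedding_Ioi, ← Ico_add_one_left_eq_Ioo, Fin.valEmbedding_apply] at hmap
  rw [← hmap]
  exact sum_Ico_pow_succ_lt_pow hρ hone (by omega)

theorem sum_mul_pow_succ_lt_of_lex (hρ : 0 < ρ) (hone : ∑ i ∈ range m, ρ ^ (i + 1) = 1)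
    {n : ℕ} (hn : n ≤ m) {ε ε' : Fin n → ℝ} (hε : ∀ j, ε j = 1 ∨ ε j = -1)
    (hε' : ∀ j, ε' j = 1 ∨ ε' j = -1) (hlt : toLex ε < toLex ε') :
    ∑ j, ε j * ρ ^ ((j : ℕ) + 1) < ∑ j, ε' j * ρ ^ ((j : ℕ) + 1) := by
  obtain ⟨k, heq, hk⟩ : ∃ k, (∀ j < k, ε j = ε' j) ∧ ε k < ε' k := hlt
  have hk' : ε k = -1 ∧ ε' k = 1 := by
    rcases hε k with h | h <;> rcases hε' k with h' | h' <;> constructor <;> linarith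
  exact sum_mul_lt_sum_mul_of_lex (fun j => (pow_pos hρ _).le)
    (fun j => by rcases hε j with h | h <;> linarith)
    (fun j => by rcases hε' j with h | h <;> linarith)
    (sum_Ioi_pow_succ_lt hρ hone hn k) heq hk'.1 hk'.2

end Pisot

theorem stmt_4 (m : ℕ) (β : ℝ) (hβ1 : 1 < β)
    (hβ : β ^ m = ∑ j ∈ Finset.range m, β ^ j) (ρ : ℝ) (hρ : ρ = 1 / β)
    (n : ℕ) (hn : n ≤ m) :
    (∀ ε ε' : Fin n → ℝ, (∀ j, ε j = 1 ∨ ε j = -1) → (∀ j, ε' j = 1 ∨ ε' j = -1) →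
      (∃ k : Fin n, (∀ j, j < k → ε j = ε' j) ∧ ε k < ε' k) →
      ∑ j, ε j * ρ ^ ((j : ℕ) + 1) < ∑ j, ε' j * ρ ^ ((j : ℕ) + 1)) ∧
    (∀ ε ε' : Fin n → ℝ, (∀ j, ε j = 1 ∨ ε j = -1) → (∀ j, ε' j = 1 ∨ ε' j = -1) →
      ∑ j, ε j * ρ ^ ((j : ℕ) + 1) = ∑ j, ε' j * ρ ^ ((j : ℕ) + 1) → ε = ε') := by
  have hβ0 : 0 < β := zero_lt_one.trans hβ1
  rw [one_div] at hρ
  subst hρ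
  have hρ0 : 0 < β⁻¹ := inv_pos.mpr hβ0
  have hone := sum_range_inv_pow_succ_eq_one hβ0.ne' hβ
  refine ⟨fun ε ε' hε hε' hlt => sum_mul_pow_succ_lt_of_lex hρ0 hone hn hε hε' hlt,
    fun ε ε' hε hε' hsum => ?_⟩
  rcases lt_trichotomy (toLex ε) (toLex ε') with hlt | hlex | hgt
  · exact absurd hsum (sum_mul_pow_succ_lt_of_lex hρ0 hone hn hε hε' hlt).ne
  · exact hlex
  · exact absurd hsum (sum_mul_pow_succ_lt_of_lex hρ0 hone hn hε' hε hgt).ne'
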